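/- Let q ≥ 2 be an integer, 1/2 < λ < 1, δ > 1, and let (K_j) be defined by K_1 ≥ 1 a constant, α_j = (2λ)^{j−1}, β_j = ⌈e^{α_{j−1}^δ · ln K_{j−1}}⌉, and K_j = q^{β_j} for j ≥ 2. Then for every γ > 1 there exists a constant c₆ ≥ 1 such that K_j ≤ e↑↑(c₆·j^γ) for all j ≥ 1. -/
import Mathlib

open Real Filter

noncomputable def tet : ℕ → ℝ
  | 0 => 1
  | n + 1 => Real.exp (tet n)

noncomputable def lnStar (x : ℝ) : ℕ := sInf {n : ℕ | Real.log^[n] x ≤ 1}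

lemma one_le_tet : ∀ n, 1 ≤ tet n
  | 0 => le_refl 1
  | n + 1 => by
      have h := one_le_tet n
      have : (1:ℝ) ≤ Real.exp (tet n) :=
        le_trans (by linarith [Real.add_one_le_exp (tet n)]) (le_refl _)
      simpa [tet] using this

lemma tet_mono : Monotone tet := by
  apply monotone_nat_of_le_succ
  intro n
  have h := one_le_tet n
  have h2 : tet n + 1 ≤ Real.exp (tet n) := Real.add_one_le_exp _
  show tet n ≤ tet (n+1)
  simp only [tet]
  linarith

lemma exp_nat_le_tet : ∀ n : ℕ, Real.exp n ≤ tet n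
  | 0 => by simp [tet]
  | n + 1 => by
      have ih := exp_nat_le_tet n
      have h1 : ((n:ℝ) + 1) ≤ Real.exp n := Real.add_one_le_exp _
      have : Real.exp ((n:ℝ) + 1) ≤ Real.exp (tet n) := by
        apply Real.exp_le_exp.2; linarith
      simpa [tet, Nat.cast_add] using this

lemma le_exp_half (t : ℝ) (ht : 0 ≤ t) : t ≤ Real.exp (t/2) := by
  have h := Real.add_one_le_exp (t/4)
  have h2 : Real.exp (t/2) = Real.exp (t/4) * Real.exp (t/4) := by
    rw [← Real.exp_add]; ring_nf
  nlinarith [Real.exp_pos (t/4), sq_nonneg (1 - t/4), sq_nonneg (Real.exp (t/4) - 1 - t/4)]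

set_option maxHeartbeats 2000000 in
theorem stmt15 (q : ℕ) (hq : 2 ≤ q) (l : ℝ) (hl1 : 1 / 2 < l) (hl2 : l < 1)
    (δ : ℝ) (hδ : 1 < δ) (K : ℕ → ℝ) (hK1 : 1 ≤ K 1)
    (hrec : ∀ j : ℕ, 2 ≤ j →
      K j = (q : ℝ) ^
        (⌈Real.exp (((2 * l) ^ (j - 2) : ℝ) ^ δ * Real.log (K (j - 1)))⌉₊ : ℕ)) :
    ∀ γ : ℝ, 1 < γ → ∃ c₆ : ℝ, 1 ≤ c₆ ∧
      ∀ j : ℕ, 1 ≤ j → K j ≤ tet ⌈c₆ * (j : ℝ) ^ γ⌉₊ := by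
  intro γ hγ
  have hq1 : (1:ℝ) < q := by exact_mod_cast Nat.lt_of_lt_of_le one_lt_two hq
  have hq0 : (0:ℝ) < q := by linarith
  have hlogq : 0 < Real.log q := Real.log_pos hq1
  have hKge : ∀ j : ℕ, 1 ≤ j → 1 ≤ K j := by
    intro j hj
    rcases eq_or_lt_of_le hj with h | h
    · rw [← h]; exact hK1
    · rw [hrec j h]
      exact one_le_pow₀ (le_of_lt hq1)
  set B : ℝ := δ * Real.log 2 + q + 1 with hB
  have hlog2 : (0:ℝ) < Real.log 2 := Real.log_pos one_lt_two
  have hBpos : 0 < B := by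
    have h1 : (0:ℝ) < δ * Real.log 2 := mul_pos (by linarith) hlog2
    rw [hB]; positivity
  clear_value B
  obtain ⟨C, hC⟩ := exists_nat_ge (max (max (4*B) 2) (K 1))
  have hC4B : 4*B ≤ C := le_trans (le_trans (le_max_left _ _) (le_max_left _ _)) hC
  have hC2 : (2:ℝ) ≤ C := le_trans (le_trans (le_max_right _ _) (le_max_left _ _)) hC
  have hC2n : 2 ≤ C := by exact_mod_cast hC2
  have hCK : K 1 ≤ C := le_trans (le_max_right _ _) hC
  -- main claim
  have main : ∀ j : ℕ, 1 ≤ j → K j ≤ tet (C * j) := by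
    intro j hj
    induction j, hj using Nat.le_induction with
    | base =>
        have h1 : (C:ℝ) ≤ Real.exp C := by
          have := Real.add_one_le_exp (C:ℝ); linarith
        calc K 1 ≤ (C:ℝ) := hCK
          _ ≤ Real.exp C := h1
          _ ≤ tet C := exp_nat_le_tet C
          _ = tet (C * 1) := by rw [mul_one]
    | succ j hj ih =>
        have h := hrec (j+1) (by omega)
        have e1 : j + 1 - 1 = j := by omega
        have e2 : j + 1 - 2 = j - 1 := by omega
        rw [e1, e2] at h
        set N : ℕ := ⌈Real.exp (((2 * l) ^ (j - 1) : ℝ) ^ δ * Real.log (K j))⌉₊ with hN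
        set E : ℝ := ((2 * l) ^ (j - 1) : ℝ) ^ δ * Real.log (K j) with hE
        clear_value N E
        have hKj1 : 1 ≤ K j := hKge j hj
        have hlogKj : 0 ≤ Real.log (K j) := Real.log_nonneg hKj1
        have h2l0 : (0:ℝ) ≤ 2 * l := by linarith
        have hEnn : 0 ≤ E := by
          rw [hE]
          apply mul_nonneg _ hlogKj
          exact Real.rpow_nonneg (pow_nonneg h2l0 _) δ
        -- t = tet (C*j - 1)
        set t : ℝ := tet (C * j - 1) with ht
        clear_value t
        have hCj1 : 1 ≤ C * j := by nlinarith [hj, hC2n]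
        have htet : tet (C * j) = Real.exp t := by
          have hcj : C * j = (C * j - 1) + 1 := by omega
          rw [hcj, ht]; rfl
        have ht1 : 1 ≤ t := by rw [ht]; exact one_le_tet _
        -- t ≥ C*j
        have htCj : (C:ℝ) * j ≤ t := by
          have h1 : Real.exp ((C*j - 1 : ℕ) : ℝ) ≤ t := by
            rw [ht]; exact exp_nat_le_tet _
          have h2 : ((C*j - 1 : ℕ) : ℝ) = (C:ℝ)*j - 1 := by
            push_cast [Nat.cast_sub hCj1]; ring
          have h3 := Real.add_one_le_exp ((C:ℝ)*j - 1)
          rw [h2] at h1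
          have : (C:ℝ)*j ≤ Real.exp ((C:ℝ)*j - 1) := by linarith
          linarith
        -- bound E
        have hαle : ((2 * l) ^ (j - 1) : ℝ) ^ δ ≤ Real.exp (δ * (j * Real.log 2)) := by
          have hb : ((2*l) ^ (j-1) : ℝ) ≤ Real.exp ((j:ℝ) * Real.log 2) := by
            have h2l2 : (2*l:ℝ) ≤ 2 := by linarith
            have hp : ((2*l) ^ (j-1) : ℝ) ≤ 2 ^ (j-1) :=
              pow_le_pow_left₀ h2l0 h2l2 _
            have hp2 : (2:ℝ) ^ (j-1) ≤ 2 ^ j :=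
              pow_le_pow_right₀ one_le_two (by omega)
            have he : Real.exp ((j:ℝ) * Real.log 2) = 2 ^ j := by
              rw [Real.exp_nat_mul, Real.exp_log (show (0:ℝ) < 2 by norm_num)]
            rw [he]; linarith
          calc ((2 * l) ^ (j - 1) : ℝ) ^ δ
              ≤ (Real.exp ((j:ℝ) * Real.log 2)) ^ δ :=
                Real.rpow_le_rpow (pow_nonneg h2l0 _) hb (by linarith)
            _ = Real.exp (δ * ((j:ℝ) * Real.log 2)) := by
                rw [← Real.exp_mul]; ring_nf
        have hlogKle : Real.log (K j) ≤ t := by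
          have := Real.log_le_log (by linarith : (0:ℝ) < K j) ih
          rw [htet, Real.log_exp] at this
          exact this
        have hEle : E ≤ Real.exp (δ * (j * Real.log 2)) * t := by
          rw [hE]
          apply mul_le_mul hαle hlogKle hlogKj (le_of_lt (Real.exp_pos _))
        -- N ≤ exp E + 1
        have hNle : (N:ℝ) ≤ Real.exp E + 1 := by
          rw [hN]
          exact le_of_lt (Nat.ceil_lt_add_one (le_of_lt (Real.exp_pos _)))
        -- K (j+1) = exp (N * log q)
        have hKj1eq : K (j+1) = Real.exp ((N:ℝ) * Real.log q) := by
          rw [h, Real.exp_nat_mul, Real.exp_log hq0]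
        -- core inequality: E + 1 + log (log q) ≤ tet (C*j)
        have hcore : E + 1 + Real.log (Real.log q) ≤ Real.exp t := by
          have hll : Real.log (Real.log q) ≤ (q:ℝ) := by
            calc Real.log (Real.log q) ≤ Real.log q :=
                  Real.log_le_sub_one_of_pos hlogq |>.trans (by linarith)
              _ ≤ (q:ℝ) := Real.log_le_sub_one_of_pos hq0 |>.trans (by linarith)
          have step1 : E + 1 + Real.log (Real.log q)
              ≤ (Real.exp (δ * (j * Real.log 2)) + 1 + q) * t := by
            have := hEle
            nlinarith [Real.exp_pos (δ * ((j:ℝ) * Real.log 2))]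
          have step2 : Real.exp (δ * (j * Real.log 2)) + 1 + q
              ≤ Real.exp (B * (j+1)) := by
            have h1 : δ * ((j:ℝ) * Real.log 2) + ((q:ℝ) + 1) ≤ B * (j+1) := by
              rw [hB]
              have hδl2 : 0 ≤ δ * Real.log 2 := by positivity
              have hj1 : (1:ℝ) ≤ (j:ℝ) := by exact_mod_cast hj
              nlinarith
            have h2 : Real.exp (δ * ((j:ℝ) * Real.log 2)) + ((q:ℝ) + 1)
                ≤ Real.exp (δ * ((j:ℝ) * Real.log 2) + ((q:ℝ)+1)) := by
              have hx : 0 ≤ δ * ((j:ℝ) * Real.log 2) := by positivity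
              have hy : (0:ℝ) ≤ (q:ℝ) + 1 := by positivity
              have := Real.add_one_le_exp ((q:ℝ)+1)
              have hex := Real.exp_add (δ * ((j:ℝ) * Real.log 2)) ((q:ℝ)+1)
              nlinarith [Real.one_le_exp hx, Real.exp_pos (δ * ((j:ℝ) * Real.log 2))]
            calc Real.exp (δ * (j * Real.log 2)) + 1 + q
                ≤ Real.exp (δ * ((j:ℝ) * Real.log 2) + ((q:ℝ)+1)) := by linarith
              _ ≤ Real.exp (B * (j+1)) := Real.exp_le_exp.2 h1
          -- exp(B(j+1)) * t ≤ exp t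
          have hBj : B * (j+1) ≤ t / 2 := by
            have hj1 : (1:ℝ) ≤ (j:ℝ) := by exact_mod_cast hj
            have : 4 * B * (j:ℝ) ≤ (C:ℝ) * j := by nlinarith
            nlinarith
          have hfin : Real.exp (B * (j+1)) * t ≤ Real.exp t := by
            have h1 : Real.exp (B * (j+1)) ≤ Real.exp (t/2) :=
              Real.exp_le_exp.2 hBj
            have h2 : t ≤ Real.exp (t/2) := le_exp_half t (by linarith)
            have h3 : Real.exp (t/2) * Real.exp (t/2) = Real.exp t := by
              rw [← Real.exp_add]; ring_nf
            nlinarith [Real.exp_pos (t/2), Real.exp_pos (B*((j:ℝ)+1))]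
          have htpos : 0 < t := by linarith
          calc E + 1 + Real.log (Real.log q)
              ≤ (Real.exp (δ * (j * Real.log 2)) + 1 + q) * t := step1
            _ ≤ Real.exp (B * (j+1)) * t := by nlinarith
            _ ≤ Real.exp t := hfin
        -- assemble
        have hNlogq : (N:ℝ) * Real.log q ≤ Real.exp (E + 1 + Real.log (Real.log q)) := by
          have h1 : (N:ℝ) * Real.log q ≤ (Real.exp E + 1) * Real.log q :=
            mul_le_mul_of_nonneg_right hNle (le_of_lt hlogq)
          have h2 : (Real.exp E + 1) * Real.log q ≤ Real.exp (E + 1) * Real.log q := by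
            have : Real.exp E + 1 ≤ Real.exp (E+1) := by
              have := Real.add_one_le_exp (1:ℝ)
              have hex := Real.exp_add E 1
              nlinarith [Real.exp_pos E, Real.one_le_exp hEnn]
            exact mul_le_mul_of_nonneg_right this (le_of_lt hlogq)
          have h3 : Real.exp (E + 1) * Real.log q = Real.exp (E + 1 + Real.log (Real.log q)) := by
            rw [Real.exp_add (E+1), Real.exp_log hlogq]
          linarith
        have htetCj : Real.exp t = tet (C * j) := htet.symm
        have hexpand : C * (j+1) = C * j + C := by ring
        have hkey : (N:ℝ) * Real.log q ≤ tet (C * (j+1) - 1) := by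
          have hmono : tet (C * j) ≤ tet (C * (j+1) - 2) :=
            tet_mono (by omega)
          have hstep : Real.exp (tet (C * (j+1) - 2)) = tet (C * (j+1) - 1) := by
            have : C * (j+1) - 1 = (C * (j+1) - 2) + 1 := by omega
            rw [this]; rfl
          calc (N:ℝ) * Real.log q ≤ Real.exp (E + 1 + Real.log (Real.log q)) := hNlogq
            _ ≤ Real.exp (Real.exp t) := Real.exp_le_exp.2 (by linarith [hcore])
            _ = Real.exp (tet (C * j)) := by rw [htetCj]
            _ ≤ Real.exp (tet (C * (j+1) - 2)) := Real.exp_le_exp.2 hmono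
            _ = tet (C * (j+1) - 1) := hstep
        rw [hKj1eq]
        have hlast : Real.exp (tet (C * (j+1) - 1)) = tet (C * (j+1)) := by
          have : C * (j+1) = (C * (j+1) - 1) + 1 := by omega
          rw [this]; rfl
        calc Real.exp ((N:ℝ) * Real.log q) ≤ Real.exp (tet (C * (j+1) - 1)) :=
              Real.exp_le_exp.2 hkey
          _ = tet (C * (j+1)) := hlast
  refine ⟨C, by linarith, fun j hj => ?_⟩
  have hle : (C * j : ℕ) ≤ ⌈(C:ℝ) * (j:ℝ) ^ γ⌉₊ := by
    have hj1 : (1:ℝ) ≤ (j:ℝ) := by exact_mod_cast hj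
    have h1 : (j:ℝ) ≤ (j:ℝ) ^ γ := by
      calc (j:ℝ) = (j:ℝ) ^ (1:ℝ) := (Real.rpow_one _).symm
        _ ≤ (j:ℝ) ^ γ := Real.rpow_le_rpow_of_exponent_le hj1 (le_of_lt hγ)
    have h2 : ((C * j : ℕ):ℝ) ≤ (C:ℝ) * (j:ℝ) ^ γ := by
      push_cast
      nlinarith [hC2]
    exact_mod_cast h2.trans (Nat.le_ceil _)
  exact (main j hj).trans (tet_mono hle)
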